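/- With the hypotheses of the hard Lefschetz decomposition (graded finite-dimensional vector space H centered at degree d with operator L of degree 2 satisfying hard Lefschetz, primitive parts P^{d-i} = ker(L^{i+1}) ∩ H^{d-i}), for any integers j ≥ 1 and s, the kernel of L^j : H^{d-s} → H^{d-s+2j} equals the direct sum ⊕_{a=0}^{j-s-1} L^a(P^{d-s-2a}) (interpreted as 0 if j ≤ s), i.e. exactly those Lefschetz summands L^a P^{d-s-2a} with a + j ≥ s + 2a + 1. -/
import Mathlib


open Submodule

/-- In the hard Lefschetz setting, for integers `j ≥ 1` and `s`, the kernel of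
`L^j : H^{d-s} → H^{d-s+2j}` equals `⊕_{a=0}^{j-s-1} L^a(P^{d-s-2a})`
(interpreted as `0` if `j ≤ s`). -/
theorem stmt4 {K V : Type*} [Field K] [AddCommGroup V] [Module K V]
    [FiniteDimensional K V]
    (H : ℤ → Submodule K V) (d : ℤ) (L : V →ₗ[K] V)
    (hinternal : DirectSum.IsInternal H)
    (hdeg : ∀ k : ℤ, (H k).map L ≤ H (k + 2))
    (hHL : ∀ j : ℕ,
      Submodule.map (L ^ j) (H (d - j)) = H (d + j) ∧
      ∀ x ∈ H (d - j), (L ^ j) x = 0 → x = 0)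
    (P : ℤ → Submodule K V)
    (hP : ∀ m : ℤ, P m = H m ⊓ LinearMap.ker (L ^ (d - m + 1).toNat)) :
    ∀ j s : ℤ, 1 ≤ j →
      H (d - s) ⊓ LinearMap.ker (L ^ j.toNat) =
        ⨆ a ∈ Finset.range (j - s).toNat,
          Submodule.map (L ^ a) (P (d - s - 2 * a)) := by
  -- element version of the degree shift
  have hmem : ∀ (n : ℕ) (k : ℤ) (x : V), x ∈ H k → (L ^ n) x ∈ H (k + 2 * n) := by
    intro n
    induction n with
    | zero => intro k x hx; simpa using hx
    | succ n ih =>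
      intro k x hx
      have h1 : (L ^ (n + 1)) x = L ((L ^ n) x) := by
        rw [pow_succ', Module.End.mul_apply]
      have h2 : L ((L ^ n) x) ∈ H (k + 2 * n + 2) :=
        hdeg (k + 2 * n) ⟨_, ih k x hx, rfl⟩
      have h3 : k + 2 * n + 2 = k + 2 * ((n : ℤ) + 1) := by ring
      rw [h1]
      have h4 : (k + 2 * ((n : ℕ) + 1 : ℕ) : ℤ) = k + 2 * n + 2 := by push_cast; ring
      rw [h4]
      exact h2
  -- pow application splitting
  have hpow : ∀ (m n : ℕ) (x : V), (L ^ (m + n)) x = (L ^ m) ((L ^ n) x) := by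
    intro m n x
    rw [pow_add, Module.End.mul_apply]
  have hpow1 : ∀ (n : ℕ) (v : V), (L ^ n) (L v) = (L ^ (n + 1)) v := by
    intro n v
    rw [pow_succ, Module.End.mul_apply]
  have hpow1' : ∀ (n : ℕ) (v : V), L ((L ^ n) v) = (L ^ (n + 1)) v := by
    intro n v
    rw [pow_succ', Module.End.mul_apply]
  -- Forward inclusion: each summand lies in the kernel and in degree d - s
  have fwd : ∀ j s : ℤ, 1 ≤ j → ∀ a : ℕ, a ∈ Finset.range (j - s).toNat →
      Submodule.map (L ^ a) (P (d - s - 2 * a)) ≤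
        H (d - s) ⊓ LinearMap.ker (L ^ j.toNat) := by
    intro j s hj a ha
    rintro x ⟨y, hy, rfl⟩
    have haN : a < (j - s).toNat := Finset.mem_range.mp ha
    have hyH : y ∈ H (d - s - 2 * a) := by
      rw [hP] at hy; exact hy.1
    have hyk : (L ^ (d - (d - s - 2 * a) + 1).toNat) y = 0 := by
      rw [hP] at hy; exact hy.2
    constructor
    · have := hmem a (d - s - 2 * a) y hyH
      have he : d - s - 2 * a + 2 * a = d - s := by ring
      rwa [he] at this
    · -- kernel part
      have harg : d - (d - s - 2 * (a : ℤ)) + 1 = s + 2 * a + 1 := by ring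
      rw [harg] at hyk
      have hle : (s + 2 * (a : ℤ) + 1).toNat ≤ j.toNat + a := by omega
      show (L ^ j.toNat) ((L ^ a) y) = 0
      rw [← hpow]
      have h6 := hpow (j.toNat + a - (s + 2 * (a : ℤ) + 1).toNat)
        ((s + 2 * (a : ℤ) + 1).toNat) y
      have hnat : j.toNat + a - (s + 2 * (a : ℤ) + 1).toNat +
          (s + 2 * (a : ℤ) + 1).toNat = j.toNat + a := by omega
      rw [hnat] at h6
      rw [h6, hyk, map_zero]
  -- Main reverse inclusion, by induction on (j - s).toNat
  have main : ∀ N : ℕ, ∀ j s : ℤ, 1 ≤ j → (j - s).toNat ≤ N →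
      H (d - s) ⊓ LinearMap.ker (L ^ j.toNat) ≤
        ⨆ a ∈ Finset.range (j - s).toNat,
          Submodule.map (L ^ a) (P (d - s - 2 * a)) := by
    intro N
    induction N with
    | zero =>
      intro j s hj hN
      -- j ≤ s, kernel is trivial
      rintro x ⟨hxH, hxk⟩
      have hxk : (L ^ j.toNat) x = 0 := hxk
      have hjs : j ≤ s := by omega
      have hs0 : 0 ≤ s := by omega
      have hds : d - s = d - (s.toNat : ℤ) := by omega
      have hinj := (hHL s.toNat).2 x (by rwa [← hds])
      have hsplit : s.toNat = (s - j).toNat + j.toNat := by omega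
      have hx0 : x = 0 := by
        apply hinj
        rw [hsplit, hpow, hxk, map_zero]
      rw [hx0]
      exact Submodule.zero_mem _
    | succ N ih =>
      intro j s hj hN
      by_cases hcase : (j - s).toNat ≤ N
      · exact ih j s hj hcase
      have hNeq : (j - s).toNat = N + 1 := by omega
      have hjs : s < j := by omega
      rintro x ⟨hxH, hxk⟩
      have hxk : (L ^ j.toNat) x = 0 := hxk
      -- construct p ∈ P (d - s) and y ∈ H (d - s - 2) with x = p + L y,
      -- L^(j.toNat + 1) y = 0
      have key : ∃ p y, p ∈ P (d - s) ∧ y ∈ H (d - s - 2) ∧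
          (L ^ (j.toNat + 1)) y = 0 ∧ x = p + L y := by
        by_cases hs : 0 ≤ s
        · -- s ≥ 0 case
          obtain ⟨t, rfl⟩ : ∃ t : ℕ, s = (t : ℤ) := ⟨s.toNat, by omega⟩
          -- L^(t+1) x ∈ H (d + t + 2)
          have h1 : (L ^ (t + 1)) x ∈ H (d + (t + 2 : ℕ)) := by
            have := hmem (t + 1) (d - t) x hxH
            have he : d - (t : ℤ) + 2 * ((t : ℕ) + 1 : ℕ) = (d + ((t : ℕ) + 2 : ℕ) : ℤ) := by
              push_cast; omega
            rwa [he] at this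
          -- surjectivity of L^(t+2)
          rw [← (hHL (t + 2)).1] at h1
          obtain ⟨z, hzH, hz⟩ := h1
          have hzdeg : z ∈ H (d - (t : ℤ) - 2) := by
            have he : (d - ((t : ℕ) + 2 : ℕ) : ℤ) = d - (t : ℤ) - 2 := by push_cast; omega
            rwa [he] at hzH
          have hker : (L ^ (t + 1)) (x - L z) = 0 := by
            rw [map_sub, hpow1, hz, sub_self]
          refine ⟨x - L z, z, ?_, hzdeg, ?_, by abel⟩
          · -- x - L z ∈ P (d - t)
            have hLz : L z ∈ H (d - (t : ℤ)) := by
              have := hdeg (d - (t : ℤ) - 2) ⟨z, hzdeg, rfl⟩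
              have he : d - (t : ℤ) - 2 + 2 = d - (t : ℤ) := by ring
              rwa [he] at this
            rw [hP]
            have he : (d - (d - (t : ℤ)) + 1).toNat = t + 1 := by omega
            rw [he]
            exact ⟨sub_mem hxH hLz, hker⟩
          · -- L^(j.toNat+1) z = 0
            have hjt : t + 1 ≤ j.toNat := by omega
            have hLjx : (L ^ j.toNat) (L z) = (L ^ j.toNat) x := by
              have hp : (L ^ j.toNat) (x - L z) = 0 := by
                have h5 := hpow (j.toNat - (t + 1)) (t + 1) (x - L z)
                have hnat : j.toNat - (t + 1) + (t + 1) = j.toNat := by omega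
                rw [hnat] at h5
                rw [h5, hker, map_zero]
              have hms := map_sub (L ^ j.toNat) x (L z)
              rw [hp] at hms
              exact (sub_eq_zero.mp hms.symm).symm
            rw [← hpow1, hLjx, hxk]
        · -- s < 0 case: x = L y with y = L^(n-1) z
          push_neg at hs
          obtain ⟨n, hns⟩ : ∃ n : ℕ, s = -(n : ℤ) := ⟨(-s).toNat, by omega⟩
          subst hns
          have hn1 : 1 ≤ n := by omega
          have h1 : x ∈ Submodule.map (L ^ n) (H (d - n)) := by
            rw [(hHL n).1]
            have he : (d + (n : ℤ)) = d - -(n : ℤ) := by omega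
            rwa [he]
          obtain ⟨z, hzH, hz⟩ := h1
          have hyH : (L ^ (n - 1)) z ∈ H (d - -(n : ℤ) - 2) := by
            have := hmem (n - 1) (d - n) z hzH
            have he : d - (n : ℤ) + 2 * ((n - 1 : ℕ) : ℤ) = d - -(n : ℤ) - 2 := by
              push_cast [Nat.cast_sub hn1]; omega
            rwa [he] at this
          have hLy : L ((L ^ (n - 1)) z) = x := by
            rw [hpow1']
            have he : n - 1 + 1 = n := by omega
            rw [he, hz]
          refine ⟨0, (L ^ (n - 1)) z, Submodule.zero_mem _, hyH, ?_, by rw [zero_add, hLy]⟩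
          rw [pow_succ, Module.End.mul_apply, hLy, hxk]
      obtain ⟨p, y, hpP, hyH, hyk, hxe⟩ := key
      -- apply induction to y with (j+1, s+2)
      have hy' : y ∈ H (d - (s + 2)) ⊓ LinearMap.ker (L ^ (j + 1).toNat) := by
        constructor
        · have : d - (s + 2) = d - s - 2 := by ring
          rwa [this]
        · show (L ^ (j + 1).toNat) y = 0
          have h7 : (j + 1).toNat = j.toNat + 1 := by omega
          rw [h7]
          exact hyk
      have hN' : (j + 1 - (s + 2)).toNat ≤ N := by omega
      have hyT := ih (j + 1) (s + 2) (by omega) hN' hy'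
      have hNT : (j + 1 - (s + 2)).toNat = N := by omega
      rw [hNT] at hyT
      -- now: p is the a = 0 term, L y lands in terms a + 1
      rw [hxe, hNeq]
      apply Submodule.add_mem
      · -- p ∈ sup, a = 0 term
        apply Submodule.mem_iSup_of_mem 0
        apply Submodule.mem_iSup_of_mem (Finset.mem_range.mpr (Nat.succ_pos N))
        refine ⟨p, ?_, by rw [pow_zero, Module.End.one_apply]⟩
        have he : d - s - 2 * ((0 : ℕ) : ℤ) = d - s := by push_cast; ring
        rwa [he]
      · -- L y ∈ sup
        have hmapT : L y ∈ Submodule.map L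
            (⨆ a ∈ Finset.range N, Submodule.map (L ^ a) (P (d - (s + 2) - 2 * a))) :=
          ⟨y, hyT, rfl⟩
        simp only [Submodule.map_iSup] at hmapT
        have hle : (⨆ a, ⨆ _ : a ∈ Finset.range N,
            Submodule.map L (Submodule.map (L ^ a) (P (d - (s + 2) - 2 * a)))) ≤
            ⨆ a ∈ Finset.range (N + 1),
              Submodule.map (L ^ a) (P (d - s - 2 * a)) := by
          apply iSup_le
          intro a
          apply iSup_le
          intro ha
          have haN : a < N := Finset.mem_range.mp ha
          have heq : Submodule.map L (Submodule.map (L ^ a) (P (d - (s + 2) - 2 * a))) =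
              Submodule.map (L ^ (a + 1)) (P (d - s - 2 * ((a + 1 : ℕ) : ℤ))) := by
            rw [← Submodule.map_comp]
            congr 1
            · rw [pow_succ']; rfl
            · congr 1; push_cast; ring
          rw [heq]
          exact le_iSup_of_le (a + 1)
            (le_iSup_of_le (Finset.mem_range.mpr (by omega)) le_rfl)
        exact hle hmapT
  intro j s hj
  apply le_antisymm
  · exact main (j - s).toNat j s hj le_rfl
  · apply iSup_le
    intro a
    apply iSup_le
    intro ha
    exact fwd j s hj a ha
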